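/- For a separable bipartite density matrix σ on ℂ^{d_A} ⊗ ℂ^{d_B}, i.e. σ = Σ_i q_i σ_{A,i} ⊗ σ_{B,i} with q_i ≥ 0 summing to 1 and σ_{A,i}, σ_{B,i} density matrices, the coherent information I(A⟩B)_σ := S(σ_B) − S(σ) is nonpositive, where S is the von Neumann entropy and σ_B = Tr_A σ. -/

import Mathlib

open Matrix Kronecker
open scoped ComplexOrder

/-- Von Neumann entropy of a matrix: S(ρ) = −Σ λᵢ log λᵢ over the eigenvalues of ρ
(set to 0 if ρ is not Hermitian). -/
noncomputable def vN {n : Type*} [Fintype n] [DecidableEq n] (ρ : Matrix n n ℂ) : ℝ :=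
  if h : ρ.IsHermitian then ∑ i, Real.negMulLog (h.eigenvalues i) else 0

/-- Partial trace over the first factor. -/
noncomputable def ptrA {dA dB : ℕ}
    (σ : Matrix (Fin dA × Fin dB) (Fin dA × Fin dB) ℂ) : Matrix (Fin dB) (Fin dB) ℂ :=
  Matrix.of fun k l => ∑ i, σ (i, k) (i, l)

/-!
Diagonalising every `σ_{A,i}` and `σ_{B,i}` writes `σ = M Mᴴ`, where the columns of `M` are
product vectors `u_k ⊗ n_k` with unit vectors `u_k`: `M` is the Khatri–Rao product of `U` and
`N`. Then `Tr_A σ = N Nᴴ`, and `Mᴴ M = (Uᴴ U) ⊙ (Nᴴ N)`. Since `A Aᴴ` and `Aᴴ A` share their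
nonzero spectrum, it remains to show that Schur multiplication by the correlation matrix `Uᴴ U`
does not decrease entropy. Writing `(Uᴴ U) ⊙ X = Σ_b μ_b w_b w_bᴴ`, with `μ` the spectrum of `X`
and `(w_b)` a Parseval frame, each eigenvalue of the product is an average of the `μ_b`, with
weights forming a doubly stochastic matrix; concavity of `t ↦ -t log t` concludes.
-/

lemma mul_diagonal_mul_conjTranspose_eq_sum {n κ α : Type*} [Fintype κ] [DecidableEq κ]
    [CommSemiring α] [StarRing α] (V : Matrix n κ α) (d : κ → α) :
    V * diagonal d * Vᴴ = ∑ b, d b • vecMulVec (fun i => V i b) (star fun i => V i b) := by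
  ext i j
  simp only [mul_apply, diagonal_apply, mul_ite, mul_zero, Finset.sum_ite_eq', Finset.mem_univ,
    if_true, conjTranspose_apply, Matrix.sum_apply, Matrix.smul_apply, vecMulVec_apply,
    Pi.star_apply, smul_eq_mul]
  exact Finset.sum_congr rfl fun b _ => by ring

namespace Matrix.IsHermitian

variable {𝕜 n : Type*} [RCLike 𝕜] [Fintype n] [DecidableEq n] {A : Matrix n n 𝕜}

lemma eq_sum_smul_vecMulVec (hA : A.IsHermitian) :
    A = ∑ b, hA.eigenvalues b •
      vecMulVec ⇑(hA.eigenvectorBasis b) (star ⇑(hA.eigenvectorBasis b)) := by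
  conv_lhs => rw [hA.spectral_theorem, Unitary.conjStarAlgAut_apply, star_eq_conjTranspose,
    mul_diagonal_mul_conjTranspose_eq_sum]
  refine Finset.sum_congr rfl fun b _ => ?_
  simp [eigenvectorUnitary_apply]

lemma apply_eq_sum (hA : A.IsHermitian) (x y : n) :
    A x y = ∑ b, (hA.eigenvalues b : 𝕜) *
      (hA.eigenvectorBasis b x * star (hA.eigenvectorBasis b y)) := by
  conv_lhs => rw [hA.eq_sum_smul_vecMulVec]
  simp [Matrix.sum_apply, vecMulVec_apply, RCLike.real_smul_eq_coe_mul]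

lemma sum_vecMulVec_eigenvectorBasis (hA : A.IsHermitian) :
    ∑ b, vecMulVec ⇑(hA.eigenvectorBasis b) (star ⇑(hA.eigenvectorBasis b)) = 1 := by
  have h : (hA.eigenvectorUnitary : Matrix n n 𝕜) * diagonal 1 * (hA.eigenvectorUnitary)ᴴ = 1 := by
    simpa [star_eq_conjTranspose] using Matrix.mem_unitaryGroup_iff.mp hA.eigenvectorUnitary.2
  rw [mul_diagonal_mul_conjTranspose_eq_sum] at h
  simpa [eigenvectorUnitary_apply] using h

end Matrix.IsHermitian

namespace OrthonormalBasis

variable {𝕜 ι n : Type*} [RCLike 𝕜] [Fintype ι] [Fintype n]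

lemma star_dotProduct_self (b : OrthonormalBasis ι 𝕜 (EuclideanSpace 𝕜 n)) (a : ι) :
    star ⇑(b a) ⬝ᵥ ⇑(b a) = 1 := by
  rw [dotProduct_comm, ← EuclideanSpace.inner_eq_star_dotProduct, inner_self_eq_norm_sq_to_K,
    b.orthonormal.1 a]
  simp

lemma sum_norm_sq_star_dotProduct (b : OrthonormalBasis ι 𝕜 (EuclideanSpace 𝕜 n)) (w : n → 𝕜) :
    ∑ a, ‖star w ⬝ᵥ ⇑(b a)‖ ^ 2 = ∑ k, ‖w k‖ ^ 2 := by
  have h := b.sum_sq_norm_inner_left (WithLp.toLp 2 w)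
  simp only [EuclideanSpace.inner_eq_star_dotProduct, EuclideanSpace.norm_sq_eq] at h
  simpa [dotProduct_comm] using h

end OrthonormalBasis

lemma star_dotProduct_vecMulVec_mulVec {𝕜 n : Type*} [RCLike 𝕜] [Fintype n] (w u : n → 𝕜) :
    star u ⬝ᵥ (vecMulVec w (star w) *ᵥ u) = ((‖star w ⬝ᵥ u‖ ^ 2 : ℝ) : 𝕜) := by
  rw [vecMulVec_mulVec, op_smul_eq_smul, dotProduct_smul, smul_eq_mul, star_dotProduct u w,
    RCLike.star_def, RCLike.mul_conj, RCLike.ofReal_pow]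

lemma star_dotProduct_sum_smul_vecMulVec_mulVec {𝕜 n β : Type*} [RCLike 𝕜] [Fintype n]
    [Fintype β] (r : β → ℝ) (w : β → n → 𝕜) (u : n → 𝕜) :
    star u ⬝ᵥ ((∑ b, r b • vecMulVec (w b) (star (w b))) *ᵥ u) =
      ((∑ b, r b * ‖star (w b) ⬝ᵥ u‖ ^ 2 : ℝ) : 𝕜) := by
  simp only [sum_mulVec, dotProduct_sum, smul_mulVec, dotProduct_smul,
    star_dotProduct_vecMulVec_mulVec, RCLike.real_smul_eq_coe_mul, RCLike.ofReal_sum,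
    RCLike.ofReal_mul]

lemma conjTranspose_mul_self_hadamard_sum_smul_vecMulVec {𝕜 m n β : Type*} [RCLike 𝕜]
    [Fintype m] [Fintype β] (U : Matrix m n 𝕜) (r : β → ℝ) (y : β → n → 𝕜) :
    (Uᴴ * U) ⊙ ∑ b, r b • vecMulVec (y b) (star (y b)) =
      ∑ p : m × β, r p.2 • vecMulVec (star (U p.1) * y p.2) (star (star (U p.1) * y p.2)) := by
  ext K L
  simp only [hadamard_apply, mul_apply, conjTranspose_apply, Matrix.sum_apply, Matrix.smul_apply,
    vecMulVec_apply, Fintype.sum_prod_type, Finset.sum_mul_sum, Pi.star_apply, Pi.mul_apply,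
    star_mul', star_star, RCLike.real_smul_eq_coe_mul]
  exact Finset.sum_congr rfl fun x _ => Finset.sum_congr rfl fun b _ => by ring

open Polynomial in
lemma vN_eq_sum_roots_charpoly {n : Type*} [Fintype n] [DecidableEq n] {A : Matrix n n ℂ}
    (hA : A.IsHermitian) : vN A = (A.charpoly.roots.map fun z => Real.negMulLog z.re).sum := by
  rw [vN, dif_pos hA, hA.roots_charpoly_eq_eigenvalues, Multiset.map_map]
  rfl

open Polynomial in
lemma sum_roots_map_eq_of_X_pow_mul_eq {R M : Type*} [CommRing R] [IsDomain R]
    [AddCommMonoid M] {p q : R[X]} {k l : ℕ} (hp : p ≠ 0) (hq : q ≠ 0)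
    (h : X ^ k * p = X ^ l * q) {f : R → M} (hf : f 0 = 0) :
    (p.roots.map f).sum = (q.roots.map f).sum := by
  have := congrArg (fun r : R[X] => (r.roots.map f).sum) h
  simpa [roots_mul, hp, hq, X_ne_zero, Multiset.map_nsmul, hf, Multiset.sum_nsmul] using this

lemma vN_mul_comm {m n : Type*} [Fintype m] [Fintype n] [DecidableEq m] [DecidableEq n]
    (A : Matrix m n ℂ) (B : Matrix n m ℂ) (hAB : (A * B).IsHermitian)
    (hBA : (B * A).IsHermitian) : vN (A * B) = vN (B * A) := by
  rw [vN_eq_sum_roots_charpoly hAB, vN_eq_sum_roots_charpoly hBA]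
  exact sum_roots_map_eq_of_X_pow_mul_eq (charpoly_monic _).ne_zero (charpoly_monic _).ne_zero
    (charpoly_mul_comm' A B) (by simp)

lemma vN_conjTranspose_mul_self {m n : Type*} [Fintype m] [Fintype n] [DecidableEq m]
    [DecidableEq n] (M : Matrix m n ℂ) : vN (Mᴴ * M) = vN (M * Mᴴ) :=
  vN_mul_comm _ _ (isHermitian_conjTranspose_mul_self M) (isHermitian_mul_conjTranspose_self M)

/-- The eigenvalues of the sum are `λ_a = Σ_b c_ab μ_b` with `c_ab = |⟨w_b, e_a⟩|²`; the frame
condition makes the rows of `c` sum to `1`, and its columns sum to `‖w_b‖²`. -/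
theorem sum_norm_sq_mul_negMulLog_le_vN {n β : Type*} [Fintype n] [DecidableEq n] [Fintype β]
    (w : β → n → ℂ) (hw : ∑ b, vecMulVec (w b) (star (w b)) = 1) {μ : β → ℝ}
    (hμ : ∀ b, 0 ≤ μ b) :
    ∑ b, (∑ k, ‖w b k‖ ^ 2) * Real.negMulLog (μ b) ≤
      vN (∑ b, μ b • vecMulVec (w b) (star (w b))) := by
  set H := ∑ b, μ b • vecMulVec (w b) (star (w b))
  have hH : H.IsHermitian :=
    (posSemidef_sum _ fun b _ => (posSemidef_vecMulVec_self_star (w b)).smul (hμ b)).isHermitian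
  set c : n → β → ℝ := fun a b => ‖star (w b) ⬝ᵥ ⇑(hH.eigenvectorBasis a)‖ ^ 2
  have heig : ∀ a, hH.eigenvalues a = ∑ b, c a b * μ b := by
    intro a
    rw [hH.eigenvalues_eq, star_dotProduct_sum_smul_vecMulVec_mulVec, RCLike.ofReal_re]
    simp only [c, mul_comm]
  have hrow : ∀ a, ∑ b, c a b = 1 := by
    intro a
    have h := star_dotProduct_sum_smul_vecMulVec_mulVec (fun _ => 1) w ⇑(hH.eigenvectorBasis a)
    simp only [one_smul, one_mul, hw, one_mulVec, hH.eigenvectorBasis.star_dotProduct_self] at h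
    apply RCLike.ofReal_injective (K := ℂ)
    simpa [c] using h.symm
  have hcol : ∀ b, ∑ a, c a b = ∑ k, ‖w b k‖ ^ 2 := fun b =>
    hH.eigenvectorBasis.sum_norm_sq_star_dotProduct (w b)
  rw [vN, dif_pos hH]
  calc ∑ b, (∑ k, ‖w b k‖ ^ 2) * Real.negMulLog (μ b)
      = ∑ a, ∑ b, c a b * Real.negMulLog (μ b) := by
        simp_rw [← hcol, Finset.sum_mul]
        exact Finset.sum_comm
    _ ≤ ∑ a, Real.negMulLog (∑ b, c a b * μ b) := Finset.sum_le_sum fun a _ =>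
        Real.concaveOn_negMulLog.le_map_sum (fun b _ => by positivity) (hrow a)
          (fun b _ => hμ b)
    _ = ∑ a, Real.negMulLog (hH.eigenvalues a) := by simp_rw [heig]

theorem vN_le_vN_conjTranspose_mul_self_hadamard {m n : Type*} [Fintype m] [Fintype n]
    [DecidableEq n] (U : Matrix m n ℂ) (hU : (Uᴴ * U).diag = 1) {X : Matrix n n ℂ}
    (hX : X.PosSemidef) : vN X ≤ vN ((Uᴴ * U) ⊙ X) := by
  set hXh := hX.isHermitian
  set y : n → n → ℂ := fun b => ⇑(hXh.eigenvectorBasis b)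
  set w : m × n → n → ℂ := fun p => star (U p.1) * y p.2
  have hw : ∑ p, vecMulVec (w p) (star (w p)) = 1 := by
    have h := conjTranspose_mul_self_hadamard_sum_smul_vecMulVec U (fun _ => 1) y
    simp only [one_smul, y, hXh.sum_vecMulVec_eigenvectorBasis, hadamard_one, hU] at h
    exact h.symm
  have hUcol : ∀ K, ∑ x, ‖U x K‖ ^ 2 = 1 := by
    intro K
    have h := congrFun hU K
    simp only [diag_apply, mul_apply, conjTranspose_apply, RCLike.star_def, RCLike.conj_mul,
      Pi.one_apply, ← RCLike.ofReal_pow, ← RCLike.ofReal_sum] at h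
    exact RCLike.ofReal_injective (h.trans RCLike.ofReal_one.symm)
  have hnorm : ∀ b, ∑ x, ∑ K, ‖w (x, b) K‖ ^ 2 = 1 := by
    intro b
    calc ∑ x, ∑ K, ‖w (x, b) K‖ ^ 2 = ∑ K, ‖y b K‖ ^ 2 * ∑ x, ‖U x K‖ ^ 2 := by
          rw [Finset.sum_comm]
          simp [w, mul_pow, Finset.mul_sum, mul_comm]
      _ = 1 := by
          simp only [hUcol, mul_one, y, ← EuclideanSpace.norm_sq_eq,
            hXh.eigenvectorBasis.orthonormal.1 b, one_pow]
  have hdecomp := conjTranspose_mul_self_hadamard_sum_smul_vecMulVec U hXh.eigenvalues y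
  rw [← hXh.eq_sum_smul_vecMulVec] at hdecomp
  rw [hdecomp]
  calc vN X = ∑ p, (∑ K, ‖w p K‖ ^ 2) * Real.negMulLog (hXh.eigenvalues p.2) := by
        rw [vN, dif_pos hXh, Fintype.sum_prod_type, Finset.sum_comm]
        simp only [← Finset.sum_mul, hnorm, one_mul]
    _ ≤ _ := sum_norm_sq_mul_negMulLog_le_vN w hw fun p => hX.eigenvalues_nonneg p.2

def khatriRao {l m n α : Type*} [Mul α] (A : Matrix l n α) (B : Matrix m n α) :
    Matrix (l × m) n α :=
  of fun z k => A z.1 k * B z.2 k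

lemma conjTranspose_khatriRao_mul_khatriRao {l m n α : Type*} [Fintype l] [Fintype m]
    [CommSemiring α] [StarRing α] (A : Matrix l n α) (B : Matrix m n α) :
    (khatriRao A B)ᴴ * khatriRao A B = (Aᴴ * A) ⊙ (Bᴴ * B) := by
  ext k k'
  simp only [khatriRao, mul_apply, conjTranspose_apply, of_apply, hadamard_apply,
    Fintype.sum_prod_type, Finset.sum_mul_sum, star_mul']
  exact Finset.sum_congr rfl fun x _ => Finset.sum_congr rfl fun y _ => by ring

lemma ptrA_khatriRao_mul_conjTranspose {dA dB : ℕ} {κ : Type*} [Fintype κ]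
    (U : Matrix (Fin dA) κ ℂ) (N : Matrix (Fin dB) κ ℂ) (hU : (Uᴴ * U).diag = 1) :
    ptrA (khatriRao U N * (khatriRao U N)ᴴ) = N * Nᴴ := by
  ext y y'
  have hUk : ∀ k, ∑ x, U x k * star (U x k) = 1 := fun k => by
    have h := congrFun hU k
    simp only [diag_apply, mul_apply, conjTranspose_apply, Pi.one_apply] at h
    rw [← h]
    exact Finset.sum_congr rfl fun x _ => mul_comm _ _
  simp only [ptrA, khatriRao, of_apply, mul_apply, conjTranspose_apply, star_mul']
  rw [Finset.sum_comm]
  refine Finset.sum_congr rfl fun k _ => ?_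
  calc ∑ x, U x k * N y k * (star (U x k) * star (N y' k))
      = (∑ x, U x k * star (U x k)) * (N y k * star (N y' k)) := by
        rw [Finset.sum_mul]
        exact Finset.sum_congr rfl fun x _ => by ring
    _ = N y k * star (N y' k) := by rw [hUk, one_mul]

/-- The columns are indexed by `(i, a, b)`: `U` carries the eigenvector `a` of `σA i`, and `N`
the eigenvector `b` of `σB i`, weighted by `√(q i λ_a λ_b)`. -/
lemma exists_khatriRao_eq_sum_smul_kronecker {ι m n : Type*} [Fintype ι] [Fintype m]
    [DecidableEq m] [Fintype n] [DecidableEq n] {q : ι → ℝ} (hq : ∀ i, 0 ≤ q i)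
    {σA : ι → Matrix m m ℂ} {σB : ι → Matrix n n ℂ} (hA : ∀ i, (σA i).PosSemidef)
    (hB : ∀ i, (σB i).PosSemidef) :
    ∃ (U : Matrix m (ι × m × n) ℂ) (N : Matrix n (ι × m × n) ℂ), (Uᴴ * U).diag = 1 ∧
      ∑ i, (q i : ℂ) • (σA i ⊗ₖ σB i) = khatriRao U N * (khatriRao U N)ᴴ := by
  set eA := fun i => (hA i).isHermitian.eigenvectorBasis
  set eB := fun i => (hB i).isHermitian.eigenvectorBasis
  set p : ι × m × n → ℝ := fun K =>
    q K.1 * ((hA K.1).isHermitian.eigenvalues K.2.1 * (hB K.1).isHermitian.eigenvalues K.2.2)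
  have hp : ∀ K, 0 ≤ p K := fun K => mul_nonneg (hq _)
    (mul_nonneg ((hA _).eigenvalues_nonneg _) ((hB _).eigenvalues_nonneg _))
  have hsqrt : ∀ K, ((√(p K) : ℝ) : ℂ) * star ((√(p K) : ℝ) : ℂ) = p K := fun K => by
    rw [Complex.star_def, Complex.conj_ofReal, ← Complex.ofReal_mul, Real.mul_self_sqrt (hp K)]
  refine ⟨of fun x K => eA K.1 K.2.1 x, of fun y K => (√(p K) : ℂ) * eB K.1 K.2.2 y, ?_, ?_⟩
  · funext K
    exact (eA K.1).star_dotProduct_self K.2.1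
  · ext ⟨x, y⟩ ⟨x', y'⟩
    simp only [Matrix.sum_apply, Matrix.smul_apply, kronecker_apply, smul_eq_mul,
      (hA _).isHermitian.apply_eq_sum, (hB _).isHermitian.apply_eq_sum, khatriRao, of_apply,
      mul_apply, conjTranspose_apply, Fintype.sum_prod_type]
    simp_rw [Finset.sum_mul_sum, Finset.mul_sum]
    refine Finset.sum_congr rfl fun i _ => Finset.sum_congr rfl fun a _ =>
      Finset.sum_congr rfl fun b _ => ?_
    have h := hsqrt (i, a, b)
    simp only [p, Complex.ofReal_mul] at h
    rw [star_mul', star_mul']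
    linear_combination (-(eA i a x * star (eA i a x') * (eB i b y * star (eB i b y')))) * h

theorem stmt15 {dA dB : ℕ} {ι : Type} [Fintype ι]
    (q : ι → ℝ) (hq : ∀ i, 0 ≤ q i)
    (σA : ι → Matrix (Fin dA) (Fin dA) ℂ)
    (σB : ι → Matrix (Fin dB) (Fin dB) ℂ)
    (hA : ∀ i, (σA i).PosSemidef ∧ (σA i).trace = 1)
    (hB : ∀ i, (σB i).PosSemidef ∧ (σB i).trace = 1)
    (σ : Matrix (Fin dA × Fin dB) (Fin dA × Fin dB) ℂ)
    (hσ : σ = ∑ i, (q i : ℂ) • (σA i ⊗ₖ σB i)) :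
    vN (ptrA σ) - vN σ ≤ 0 := by
  classical
  obtain ⟨U, N, hU, hUN⟩ :=
    exists_khatriRao_eq_sum_smul_kronecker hq (fun i => (hA i).1) (fun i => (hB i).1)
  rw [hUN] at hσ
  have : vN (ptrA σ) ≤ vN σ := calc
    vN (ptrA σ) = vN (Nᴴ * N) := by
      rw [hσ, ptrA_khatriRao_mul_conjTranspose U N hU, vN_conjTranspose_mul_self]
    _ ≤ vN ((Uᴴ * U) ⊙ (Nᴴ * N)) :=
      vN_le_vN_conjTranspose_mul_self_hadamard U hU (posSemidef_conjTranspose_mul_self N)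
    _ = vN σ := by
      rw [← conjTranspose_khatriRao_mul_khatriRao, vN_conjTranspose_mul_self, hσ]
  linarith
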